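/- Any holomorphic automorphism of S_β of the form (ζ₁, ζ₂) ↦ (ζ₁ + c, φ₂(ζ₁,ζ₂)), with φ₂ holomorphic in (ζ₁,ζ₂) and mapping S_β into S_β, must satisfy φ₂(ζ₁,ζ₂) = ζ₂ + 2i(c̄ + βc)ζ₁ + i(|c|² + β Re(c²)) + s for some constant s ∈ ℝ. -/

import Mathlib

/-!
Subtracting the affine part of the claimed formula leaves an entire function `ψ` on `ℂ²` that is
real on `S_β`. The shear `(z, w) ↦ (z, w + iβz²)` maps `S_0 = {Im w = |z|²}` onto `S_β`, so we may
take `β = 0`. For `Im w > 0`, `z ↦ ψ(z, w)` is real on the circle `|z| = √(Im w)`, hence (maximum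
principle for its imaginary part) real on the disc, hence constant by the open mapping theorem.
So `w ↦ ψ(z, w)` is real on the whole upper half-plane, and therefore a real constant as well.
-/

open Complex

/-- The model hypersurface `S_β ⊂ ℂ²`. -/
def Sbeta (β : ℝ) : Set (ℂ × ℂ) :=
  {ζ : ℂ × ℂ | ζ.2.im = ‖ζ.1‖ ^ 2 + β * (ζ.1 ^ 2).re}

open Metric

namespace Differentiable

variable {f : ℂ → ℂ}

theorem exists_eq_const_of_im_eq_on_isOpen (hf : Differentiable ℂ f) {U : Set ℂ} {a : ℝ}
    (hU : IsOpen U) (hUc : IsConnected U) (him : ∀ z ∈ U, (f z).im = a) :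
    ∃ c, ∀ z, f z = c := by
  have hfa : AnalyticOnNhd ℂ f Set.univ := analyticOnNhd_univ_iff_differentiable.2 hf
  obtain ⟨c, hc⟩ := (hfa.mono (Set.subset_univ U)).eq_const_of_im_eq_const him hU hUc
  obtain ⟨z₀, hz₀⟩ := hUc.nonempty
  refine ⟨c, fun z => hfa.eqOn_of_preconnected_of_eventuallyEq analyticOnNhd_const
    isPreconnected_univ (Set.mem_univ z₀) ?_ (Set.mem_univ z)⟩
  filter_upwards [hU.mem_nhds hz₀] using hc

theorem re_le_of_re_le_on_sphere (hf : Differentiable ℂ f) {z₀ : ℂ} {r a : ℝ} (hr : r ≠ 0)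
    (hre : ∀ z ∈ sphere z₀ r, (f z).re ≤ a) {z : ℂ} (hz : z ∈ closedBall z₀ r) :
    (f z).re ≤ a := by
  have hexp : ∀ z, ‖cexp (f z)‖ ≤ Real.exp a ↔ (f z).re ≤ a := fun z => by
    rw [norm_exp, Real.exp_le_exp]
  rw [← hexp]
  refine Complex.norm_le_of_forall_mem_frontier_norm_le isBounded_ball
    (hf.cexp).diffContOnCl (fun w hw => ?_) (by rwa [closure_ball z₀ hr])
  rw [frontier_ball z₀ hr] at hw
  exact (hexp w).2 (hre w hw)

theorem exists_eq_const_of_im_eq_on_sphere (hf : Differentiable ℂ f) {z₀ : ℂ} {r a : ℝ}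
    (hr : 0 < r) (him : ∀ z ∈ sphere z₀ r, (f z).im = a) :
    ∃ c, ∀ z, f z = c := by
  have hle : ∀ z ∈ ball z₀ r, (-I * f z).re ≤ a :=
    fun z hz => (hf.const_mul (-I)).re_le_of_re_le_on_sphere hr.ne'
      (fun w hw => by simp [him w hw]) (ball_subset_closedBall hz)
  have hge : ∀ z ∈ ball z₀ r, (I * f z).re ≤ -a :=
    fun z hz => (hf.const_mul I).re_le_of_re_le_on_sphere hr.ne'
      (fun w hw => by simp [him w hw]) (ball_subset_closedBall hz)
  refine hf.exists_eq_const_of_im_eq_on_isOpen (a := a) isOpen_ball (isConnected_ball hr)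
    (fun z (hz : z ∈ ball z₀ r) => ?_)
  have h1 := hle z hz
  have h2 := hge z hz
  simp only [neg_mul, neg_re, mul_re, I_re, I_im, zero_mul, one_mul, zero_sub, neg_neg] at h1 h2
  linarith

end Differentiable

namespace Sbeta

theorem mk_add_mem_iff {β : ℝ} {z w : ℂ} :
    (z, w + I * β * z ^ 2) ∈ Sbeta β ↔ (z, w) ∈ Sbeta 0 := by
  simp only [Sbeta, Set.mem_ofPred_eq, add_im, mul_im, mul_re, I_re, I_im, ofReal_re, ofReal_im]
  constructor <;> intro h <;> linarith

theorem exists_ofReal_of_im_eq_zero_on_zero {Φ : ℂ × ℂ → ℂ} (hΦ : Differentiable ℂ Φ)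
    (him : ∀ ζ ∈ Sbeta 0, (Φ ζ).im = 0) :
    ∃ s : ℝ, ∀ ζ, Φ ζ = s := by
  have hmem : ∀ z w : ℂ, w.im = ‖z‖ ^ 2 → (z, w) ∈ Sbeta 0 := fun z w h => by simpa [Sbeta]
  have hslice : ∀ w : ℂ, Differentiable ℂ fun z => Φ (z, w) := fun w => hΦ.comp (by fun_prop)
  have hfibre : ∀ z : ℂ, Differentiable ℂ fun w => Φ (z, w) := fun z => hΦ.comp (by fun_prop)
  have hconst_z : ∀ z w : ℂ, 0 < w.im → Φ (z, w) = Φ (0, w) := by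
    intro z w hw
    obtain ⟨c, hc⟩ := (hslice w).exists_eq_const_of_im_eq_on_sphere (Real.sqrt_pos.2 hw)
      fun z hz => him _ <| hmem z w <| by rw [mem_sphere_zero_iff_norm.1 hz, Real.sq_sqrt hw.le]
    exact (hc z).trans (hc 0).symm
  have hreal : ∀ z w : ℂ, 0 < w.im → (Φ (z, w)).im = 0 := by
    intro z w hw
    rw [hconst_z z w hw, ← hconst_z (Real.sqrt w.im) w hw]
    refine him _ <| hmem _ w ?_
    rw [norm_real, Real.norm_of_nonneg (Real.sqrt_nonneg _), Real.sq_sqrt hw.le]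
  have hconst : ∀ z w : ℂ, Φ (z, w) = Φ (0, I) := by
    intro z w
    obtain ⟨c, hc⟩ := (hfibre z).exists_eq_const_of_im_eq_on_isOpen
      (isOpen_lt continuous_const continuous_im)
      ((convex_halfSpace_im_gt 0).isConnected ⟨I, by simp⟩) (hreal z)
    rw [hc w, ← hc I, hconst_z z I (by simp)]
  refine ⟨(Φ (0, I)).re, fun ζ => ?_⟩
  rw [hconst ζ.1 ζ.2]
  exact Complex.ext rfl (hreal 0 I (by simp))

theorem exists_ofReal_of_im_eq_zero {β : ℝ} {Φ : ℂ × ℂ → ℂ} (hΦ : Differentiable ℂ Φ)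
    (him : ∀ ζ ∈ Sbeta β, (Φ ζ).im = 0) :
    ∃ s : ℝ, ∀ ζ, Φ ζ = s := by
  obtain ⟨s, hs⟩ := exists_ofReal_of_im_eq_zero_on_zero
    (Φ := fun ζ => Φ (ζ.1, ζ.2 + I * β * ζ.1 ^ 2)) (hΦ.comp (by fun_prop))
    fun ζ hζ => him _ (mk_add_mem_iff.2 hζ)
  refine ⟨s, fun ζ => ?_⟩
  have := hs (ζ.1, ζ.2 - I * β * ζ.1 ^ 2)
  dsimp only at this
  rwa [sub_add_cancel] at this

noncomputable def translationSnd (β : ℝ) (c : ℂ) (ζ : ℂ × ℂ) : ℂ :=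
  ζ.2 + 2 * I * (starRingEnd ℂ c + β * c) * ζ.1 + I * (‖c‖ ^ 2 + β * (c ^ 2).re)

theorem im_sub_translationSnd_eq_zero {β : ℝ} {c w : ℂ} {ζ : ℂ × ℂ} (hζ : ζ ∈ Sbeta β)
    (hw : (ζ.1 + c, w) ∈ Sbeta β) : (w - translationSnd β c ζ).im = 0 := by
  have hc : ‖c‖ * ‖c‖ = c.re * c.re + c.im * c.im := by
    rw [norm_mul_self_eq_normSq, normSq_apply]
  simp only [Sbeta, Set.mem_ofPred_eq, Complex.sq_norm, normSq_apply] at hζ hw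
  simp only [translationSnd, sq, sub_im, add_im, add_re, mul_im, mul_re, I_re, I_im,
    conj_re, conj_im, ofReal_re, ofReal_im, re_ofNat, im_ofNat] at hζ hw ⊢
  linear_combination hw - hζ - hc

end Sbeta

theorem automorphism_second_component_determined
    (β : ℝ) (c : ℂ)
    (φ₂ : ℂ × ℂ → ℂ) (hφ : Differentiable ℂ φ₂)
    (hmap : ∀ ζ ∈ Sbeta β, (ζ.1 + c, φ₂ ζ) ∈ Sbeta β) :
    ∃ s : ℝ, ∀ ζ : ℂ × ℂ,
      φ₂ ζ = ζ.2 + 2 * Complex.I * ((starRingEnd ℂ) c + β * c) * ζ.1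
        + Complex.I * (‖c‖ ^ 2 + β * (c ^ 2).re) + s := by
  obtain ⟨s, hs⟩ := Sbeta.exists_ofReal_of_im_eq_zero
    (Φ := fun ζ => φ₂ ζ - Sbeta.translationSnd β c ζ)
    (hφ.sub (by unfold Sbeta.translationSnd; fun_prop))
    fun ζ hζ => Sbeta.im_sub_translationSnd_eq_zero hζ (hmap ζ hζ)
  exact ⟨s, fun ζ => eq_add_of_sub_eq' (hs ζ)⟩
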